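/- arXiv:1009.0792 — 2 statements merged into one kernel-verified Lean document; each statement's English description precedes it below -/
import Mathlib

section
/- Let δ > 0 be a constant. Then asymptotically almost surely w(G(n,1/2)) ≥ (1−δ) log₂ n. -/
open scoped Classical ENNReal

/-- The infinite rooted `s`-branching tree on `ℕ`, labeled level by level:
the children of vertex `i` are `s*i+1, …, s*i+s`; `0` is the root. -/
def branchTree (s : ℕ) : SimpleGraph ℕ where
  Adj i j := (∃ t < s, j = s * i + t + 1) ∨ (∃ t < s, i = s * j + t + 1)
  symm := ⟨fun i j h => Or.symm h⟩
  loopless := by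
    constructor
    intro i h
    rcases h with ⟨t, ht, h⟩ | ⟨t, ht, h⟩ <;>
    · have h1 : i ≤ s * i := Nat.le_mul_of_pos_left i (by omega)
      omega

/-- The level (distance from the root `0`) of a vertex of `branchTree s`. -/
def treeLevel (s : ℕ) : ℕ → ℕ
  | 0 => 0
  | j + 1 => treeLevel s (j / s) + 1
decreasing_by exact Nat.lt_succ_of_le (Nat.div_le_self j s)

/-- `φ ∈ Hom(T^d, G)` is cold if there is a vertex `a` of `G` such that for every `k`
no homomorphism `ψ` agrees with `φ` on the vertices at distance `k` from the root and
has `ψ(root) = a`. -/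
def IsCold {V : Type*} (G : SimpleGraph V) (d : ℕ) (φ : branchTree d →g G) : Prop :=
  ∃ a : V, ∀ k : ℕ, ¬ ∃ ψ : branchTree d →g G,
    (∀ x : ℕ, treeLevel d x = k → ψ x = φ x) ∧ ψ 0 = a

/-- `G` is `d`-warm if `Hom(T^{d-2}, G)` contains no cold maps. -/
def IsWarm {V : Type*} (G : SimpleGraph V) (d : ℕ) : Prop :=
  ∀ φ : branchTree (d - 2) →g G, ¬ IsCold G (d - 2) φ

/-- The warmth of `G`: the largest `d` for which `G` is `d`-warm. -/
noncomputable def warmth {V : Type*} (G : SimpleGraph V) : ℕ∞ :=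
  sSup ((fun d : ℕ => (d : ℕ∞)) '' {d : ℕ | IsWarm G d})

/-- The graph `Hom(H, G)`: vertices are the graph homomorphisms `H → G`, with two
homomorphisms adjacent when they differ at exactly one vertex of `H`. -/
def homGraph {V W : Type*} (H : SimpleGraph V) (G : SimpleGraph W) :
    SimpleGraph (H →g G) where
  Adj φ ψ := ∃! x : V, φ x ≠ ψ x
  symm := by
    constructor
    rintro φ ψ ⟨x, hx, hu⟩
    exact ⟨x, Ne.symm hx, fun y hy => hu y (Ne.symm hy)⟩
  loopless := by
    constructor
    rintro φ ⟨x, hx, -⟩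
    exact hx rfl

/-- `G` is `d`-mobile if for every finite simple graph `H` of maximum degree at most
`d - 2`, the graph `Hom(H, G)` is connected or empty. -/
def IsMobile {V : Type*} (G : SimpleGraph V) (d : ℕ) : Prop :=
  ∀ (m : ℕ) (H : SimpleGraph (Fin m)), (∀ x, H.degree x ≤ d - 2) →
    ((homGraph H G).Connected ∨ IsEmpty (H →g G))

/-- The mobility of `G`: the largest `d` for which `G` is `d`-mobile. -/
noncomputable def mobility {V : Type*} (G : SimpleGraph V) : ℕ∞ :=
  sSup ((fun d : ℕ => (d : ℕ∞)) '' {d : ℕ | IsMobile G d})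

/-- The probability of a fixed graph `G` on `{1, …, n}` under the Erdős–Rényi
distribution `G(n,p)`: each of the `n.choose 2` possible edges appears independently
with probability `p`. -/
noncomputable def erWeight (n : ℕ) (p : ℝ) (G : SimpleGraph (Fin n)) : ℝ :=
  p ^ G.edgeFinset.card * (1 - p) ^ (n.choose 2 - G.edgeFinset.card)

/-- The probability that the Erdős–Rényi random graph `G(n,p)` satisfies `Q`. -/
noncomputable def erProb (n : ℕ) (p : ℝ) (Q : SimpleGraph (Fin n) → Prop) : ℝ :=
  ∑ G ∈ Finset.univ.filter Q, erWeight n p G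

/-- The probability that a uniformly random `d`-regular graph on `n` labeled
vertices satisfies `Q`. -/
noncomputable def regProb (n d : ℕ) (Q : SimpleGraph (Fin n) → Prop) : ℝ :=
  ((Finset.univ.filter fun G : SimpleGraph (Fin n) => G.IsRegularOfDegree d ∧ Q G).card : ℝ) /
    ((Finset.univ.filter fun G : SimpleGraph (Fin n) => G.IsRegularOfDegree d).card : ℝ)

/-- The truncated `s`-branching tree `T^s_v` on `v` vertices `0, …, v-1`. -/
def truncTree (s v : ℕ) : SimpleGraph (Fin v) := (branchTree s).comap Fin.val

/-- `D(T^s_v)`: the root together with the set `L` of leaves of `T^s_v`. -/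
def treeD (s v : ℕ) : Set (Fin v) := {x | (x : ℕ) = 0 ∨ v ≤ s * (x : ℕ) + 1}

/-- `f : D(T^s_v) → V(H)` is `H`-extendable if there is a graph homomorphism
`φ : T^s_v → H` whose restriction to `D(T^s_v)` is `f`. -/
def Extendable {W : Type*} (H : SimpleGraph W) (s v : ℕ) (f : treeD s v → W) : Prop :=
  ∃ φ : truncTree s v →g H, ∀ x : treeD s v, φ (x : Fin v) = f x

/-- `H` has property `P^s_v` if every `f : D(T^s_v) → V(H)` is `H`-extendable. -/
def PropertyP {W : Type*} (H : SimpleGraph W) (s v : ℕ) : Prop :=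
  ∀ f : treeD s v → W, Extendable H s v f


/-!
If every `s + 1` vertices of `G` have a common neighbour, then `G` is `(s + 2)`-warm: given
`φ : T^s → G` and a target `a` for the root, send every child `v` of the root to a common
neighbour of `a` and of the images of the children of `v`; this homomorphism agrees with `φ`
from level two on. So `w(G) ≥ r + 1` once all `r`-sets have a common neighbour.

In `G(n, 1/2)` a fixed `r`-set has no common neighbour with probability `(1 - 2⁻ʳ) ^ (n - r)`,
hence some `r`-set has none with probability at most
`(n choose r) (1 - 2⁻ʳ) ^ (n - r) ≤ exp (r log n - 2⁻ʳ (n - r))`. For `r = ⌊c log₂ n⌋` with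
`c < 1` we have `2⁻ʳ ≥ n⁻ᶜ`, so the exponent is `O(log² n) - n ^ (1 - c) → -∞`.
Taking `c = max (1 - δ) (1/2)` gives `w ≥ r + 1 > (1 - δ) log₂ n`.
-/

open Finset Filter Real Topology

section Warmth

variable {V : Type*} {G : SimpleGraph V}

def HasCommonNeighbors (G : SimpleGraph V) (r : ℕ) : Prop :=
  ∀ g : Fin r → V, ∃ u, ∀ i, G.Adj u (g i)

theorem treeLevel_le_one {s x : ℕ} (hx : x ≤ s) : treeLevel s x ≤ 1 := by
  cases x with
  | zero => simp [treeLevel]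
  | succ j => rw [treeLevel, Nat.div_eq_of_lt (by omega), treeLevel]

theorem exists_hom_reroot {s : ℕ} (φ : branchTree s →g G) (a : V) (u : ℕ → V)
    (hau : ∀ t < s, G.Adj a (u (t + 1)))
    (huφ : ∀ i, ∀ t < s, G.Adj (u i) (φ (s * i + t + 1))) :
    ∃ ψ : branchTree s →g G, ψ 0 = a ∧ ∀ x, s < x → ψ x = φ x := by
  let F : ℕ → V := fun x => if x = 0 then a else if x ≤ s then u x else φ x
  have hF : ∀ i, ∀ t < s, G.Adj (F i) (F (s * i + t + 1)) := by
    intro i t ht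
    rcases Nat.eq_zero_or_pos i with rfl | hi
    · simpa [F, show t + 1 ≤ s by omega] using hau t ht
    have hchild : s < s * i + t + 1 := by nlinarith
    by_cases his : i ≤ s
    · simpa [F, hi.ne', his, hchild.not_ge] using huφ i t ht
    · simpa [F, hi.ne', his, hchild.not_ge] using φ.map_adj (Or.inl ⟨t, ht, rfl⟩)
  have hFmap : ∀ {x y}, (branchTree s).Adj x y → G.Adj (F x) (F y) := by
    rintro x y (⟨t, ht, rfl⟩ | ⟨t, ht, rfl⟩)
    · exact hF x t ht
    · exact (hF y t ht).symm
  refine ⟨⟨F, hFmap⟩, (if_pos rfl : F 0 = a), fun x hx => ?_⟩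
  show F x = φ x
  simp [F, hx.not_ge, ((Nat.zero_le s).trans_lt hx).ne']

theorem isWarm_of_hasCommonNeighbors {s : ℕ} (h : HasCommonNeighbors G (s + 1)) :
    IsWarm G (s + 2) := by
  change ∀ φ : branchTree s →g G, ¬ IsCold G s φ
  rintro φ ⟨a, ha⟩
  choose u hu using fun v : ℕ => h (Fin.cons a fun t : Fin s => φ (s * v + t + 1))
  obtain ⟨ψ, hψ0, hψ⟩ := exists_hom_reroot φ a u (fun t _ => (hu (t + 1) 0).symm)
    (fun i t ht => by simpa only [Fin.cons_succ] using hu i (Fin.succ ⟨t, ht⟩))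
  refine ha 2 ⟨ψ, fun x hx => hψ x ?_, hψ0⟩
  by_contra hxs
  have := treeLevel_le_one (not_lt.1 hxs)
  omega

theorem ofReal_le_warmth_of_hasCommonNeighbors {r : ℕ} (h : HasCommonNeighbors G r)
    (hr : 1 ≤ r) {x : ℝ} (hx : x ≤ r + 1) : ENNReal.ofReal x ≤ warmth G := by
  obtain ⟨s, rfl⟩ := Nat.exists_eq_add_of_le' hr
  have hwarm : ((s + 2 : ℕ) : ℕ∞) ≤ warmth G :=
    le_sSup ⟨s + 2, isWarm_of_hasCommonNeighbors h, rfl⟩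
  calc ENNReal.ofReal x ≤ ENNReal.ofReal ((s + 2 : ℕ) : ℝ) :=
        ENNReal.ofReal_le_ofReal (by push_cast at hx ⊢; linarith)
    _ = (((s + 2 : ℕ) : ℕ∞) : ℝ≥0∞) := by
        rw [ENNReal.ofReal_natCast, ENat.toENNReal_coe]
    _ ≤ warmth G := ENat.toENNReal_le.2 hwarm

end Warmth

section Counting

theorem card_subtype_comp_of_injective {A E β : Type*} [Fintype A] [Fintype E] [Fintype β]
    {ι : A → E} (hι : Function.Injective ι) (P : (A → β) → Prop) :
    Fintype.card {f : E → β // P (f ∘ ι)} * Fintype.card β ^ Fintype.card A =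
      Fintype.card {g : A → β // P g} * Fintype.card β ^ Fintype.card E := by
  let e : (E → β) ≃ (A → β) × (((Set.range ι)ᶜ : Set E) → β) :=
    (Equiv.piEquivPiSubtypeProd (· ∈ Set.range ι) _).trans <|
      Equiv.prodCongr ((Equiv.ofInjective ι hι).symm.arrowCongr (Equiv.refl β)) (Equiv.refl _)
  have he : Fintype.card {f : E → β // P (f ∘ ι)} =
      Fintype.card ({g : A → β // P g} × (((Set.range ι)ᶜ : Set E) → β)) :=
    Fintype.card_congr <| (e.subtypeEquiv (q := fun x => P x.1) fun f => Iff.rfl).trans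
      Equiv.prodSubtypeFstEquivSubtypeProd
  rw [he, Fintype.card_prod, Fintype.card_fun, mul_assoc,
    ← pow_add, Fintype.card_compl_set, Set.card_range_of_injective hι,
    Nat.sub_add_cancel (Fintype.card_le_of_injective ι hι)]

theorem card_forall_exists_not {A B : Type*} [Fintype A] [Fintype B] :
    Fintype.card {g : A × B → Prop // ∀ a, ∃ b, ¬ g (a, b)} =
      (2 ^ Fintype.card B - 1) ^ Fintype.card A := by
  have e : {g : A × B → Prop // ∀ a, ∃ b, ¬ g (a, b)} ≃
      (A → {h : B → Prop // ¬ h = fun _ => True}) :=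
    ((Equiv.curry A B Prop).subtypeEquiv fun g => by simp [funext_iff]).trans
      Equiv.subtypePiEquivPi
  rw [Fintype.card_congr e, Fintype.card_fun, Fintype.card_subtype_compl, Fintype.card_subtype_eq,
    Fintype.card_fun, Fintype.card_prop]

def edgePredEquiv (V : Type*) : SimpleGraph V ≃ ({e : Sym2 V // ¬ e.IsDiag} → Prop) where
  toFun G e := e.1 ∈ G.edgeSet
  invFun f := SimpleGraph.fromEdgeSet {e | ∃ h : ¬ e.IsDiag, f ⟨e, h⟩}
  left_inv G := by
    ext u v
    simp only [SimpleGraph.fromEdgeSet_adj, Set.mem_ofPred_eq, Sym2.mk_isDiag_iff,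
      SimpleGraph.mem_edgeSet]
    exact ⟨fun h => h.1.2, fun h => ⟨⟨G.ne_of_adj h, h⟩, G.ne_of_adj h⟩⟩
  right_inv f := by
    funext e
    simp [e.2]

theorem card_simpleGraph (V : Type*) [Fintype V] [DecidableEq V] :
    Fintype.card (SimpleGraph V) = 2 ^ (Fintype.card V).choose 2 := by
  rw [Fintype.card_congr (edgePredEquiv V), Fintype.card_fun, Fintype.card_prop,
    Sym2.card_subtype_not_diag]

variable {V : Type*}

def NoCommonNeighbor (G : SimpleGraph V) (S : Finset V) : Prop :=
  ∀ u, ∃ v ∈ S, ¬ G.Adj u v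

theorem card_noCommonNeighbor [Fintype V] [DecidableEq V] (S : Finset V) :
    Fintype.card {G : SimpleGraph V // NoCommonNeighbor G S} * 2 ^ ((Fintype.card V - #S) * #S) =
      (2 ^ #S - 1) ^ (Fintype.card V - #S) * 2 ^ (Fintype.card V).choose 2 := by
  let crossEdge : {u // u ∉ S} × {v // v ∈ S} → {e : Sym2 V // ¬ e.IsDiag} := fun p =>
    ⟨s(p.1, p.2), fun h => p.1.2 (Sym2.mk_isDiag_iff.1 h ▸ p.2.2)⟩
  have hcross : Function.Injective crossEdge := by
    rintro ⟨⟨u, hu⟩, ⟨v, hv⟩⟩ ⟨⟨u', hu'⟩, ⟨v', hv'⟩⟩ h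
    simp only [crossEdge, Subtype.mk.injEq, Sym2.eq_iff] at h
    rcases h with ⟨rfl, rfl⟩ | ⟨rfl, rfl⟩
    · rfl
    · exact absurd hv' hu
  have hP : ∀ G, NoCommonNeighbor G S ↔
      ∀ a, ∃ b, ¬ (edgePredEquiv V G ∘ crossEdge) (a, b) := by
    refine fun G => ⟨fun h u => ?_, fun h u => ?_⟩
    · obtain ⟨v, hv, huv⟩ := h u
      exact ⟨⟨v, hv⟩, huv⟩
    · by_cases hu : u ∈ S
      · exact ⟨u, hu, G.irrefl⟩
      · obtain ⟨⟨v, hv⟩, huv⟩ := h ⟨u, hu⟩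
        exact ⟨v, hv, huv⟩
  rw [Fintype.card_congr ((edgePredEquiv V).subtypeEquiv
      (q := fun f => ∀ a, ∃ b, ¬ (f ∘ crossEdge) (a, b)) hP)]
  have hcompl : Fintype.card {u // u ∉ S} = Fintype.card V - #S := by
    rw [Fintype.card_subtype_compl, Fintype.card_coe]
  rw [← hcompl, ← Fintype.card_coe S, ← card_forall_exists_not, ← Fintype.card_prod,
    ← Sym2.card_subtype_not_diag, ← Fintype.card_prop]
  convert card_subtype_comp_of_injective hcross (fun g => ∀ a, ∃ b, ¬ g (a, b)) using 3

theorem exists_noCommonNeighbor_of_not_hasCommonNeighbors [Fintype V] {G : SimpleGraph V}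
    {r : ℕ} (hr : r ≤ Fintype.card V) (h : ¬ HasCommonNeighbors G r) :
    ∃ S : Finset V, #S = r ∧ NoCommonNeighbor G S := by
  simp only [HasCommonNeighbors, not_forall, not_exists] at h
  obtain ⟨g, hg⟩ := h
  obtain ⟨S, himage, -, hS⟩ := Finset.exists_subsuperset_card_eq (subset_univ (univ.image g))
    (card_image_le.trans_eq (card_fin r)) (by rwa [card_univ])
  refine ⟨S, hS, fun u => ?_⟩
  obtain ⟨i, hi⟩ := hg u
  exact ⟨g i, himage (mem_image_of_mem g (mem_univ i)), hi⟩

end Counting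

section ErdosRenyiHalf

variable {n : ℕ}

theorem erProb_half (Q : SimpleGraph (Fin n) → Prop) :
    erProb n (1 / 2) Q = #{G | Q G} / 2 ^ n.choose 2 := by
  have hweight : ∀ G : SimpleGraph (Fin n), erWeight n (1 / 2) G = (2 ^ n.choose 2)⁻¹ := by
    intro G
    have hle : #G.edgeFinset ≤ n.choose 2 := by
      simpa using G.card_edgeFinset_le_card_choose_two
    rw [erWeight, show (1 : ℝ) - 1 / 2 = 1 / 2 by norm_num, ← pow_add, Nat.add_sub_cancel' hle,
      one_div, inv_pow]
  rw [erProb, sum_congr rfl fun G _ => hweight G, sum_const, nsmul_eq_mul, div_eq_mul_inv]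

theorem erProb_half_add_erProb_half_not (Q : SimpleGraph (Fin n) → Prop) :
    erProb n (1 / 2) Q + erProb n (1 / 2) (fun G => ¬ Q G) = 1 := by
  rw [erProb_half, erProb_half, ← add_div, ← Nat.cast_add, card_filter_add_card_filter_not,
    card_univ, card_simpleGraph, Fintype.card_fin]
  push_cast
  exact div_self (by positivity)

theorem erProb_half_le_one (Q : SimpleGraph (Fin n) → Prop) : erProb n (1 / 2) Q ≤ 1 := by
  refine (le_add_of_nonneg_right ?_).trans_eq (erProb_half_add_erProb_half_not Q)
  rw [erProb_half]
  positivity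

theorem erProb_half_mono {Q Q' : SimpleGraph (Fin n) → Prop} (h : ∀ G, Q G → Q' G) :
    erProb n (1 / 2) Q ≤ erProb n (1 / 2) Q' := by
  rw [erProb_half, erProb_half]
  gcongr
  exact h _

theorem erProb_half_exists_le {ι : Type*} (s : Finset ι)
    (Q : ι → SimpleGraph (Fin n) → Prop) :
    erProb n (1 / 2) (fun G => ∃ i ∈ s, Q i G) ≤ ∑ i ∈ s, erProb n (1 / 2) (Q i) := by
  simp only [erProb_half, ← sum_div, ← Nat.cast_sum]
  gcongr
  refine (card_le_card fun G hG => ?_).trans card_biUnion_le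
  simpa using hG

theorem erProb_half_noCommonNeighbor (S : Finset (Fin n)) :
    erProb n (1 / 2) (NoCommonNeighbor · S) = (1 - (1 / 2) ^ #S) ^ (n - #S) := by
  have hcount := card_noCommonNeighbor S
  rw [Fintype.card_fin, pow_mul'] at hcount
  have hone_sub : (1 : ℝ) - (1 / 2) ^ #S = (2 ^ #S - 1) / 2 ^ #S := by
    rw [eq_div_iff (by positivity), sub_mul, one_mul, ← mul_pow]
    norm_num
  rw [erProb_half, ← Fintype.card_subtype, hone_sub, div_pow,
    div_eq_div_iff (by positivity) (by positivity)]
  have := congrArg (Nat.cast : ℕ → ℝ) hcount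
  push_cast [Nat.cast_sub Nat.one_le_two_pow] at this
  exact this

theorem erProb_half_not_hasCommonNeighbors_le {r : ℕ} (hr : r ≤ n) :
    erProb n (1 / 2) (fun G => ¬ HasCommonNeighbors G r) ≤
      n.choose r * (1 - (1 / 2) ^ r) ^ (n - r) :=
  calc erProb n (1 / 2) (fun G => ¬ HasCommonNeighbors G r)
      ≤ erProb n (1 / 2) (fun G => ∃ S ∈ powersetCard r univ, NoCommonNeighbor G S) :=
        erProb_half_mono fun G hG => by
          obtain ⟨S, hS, hSG⟩ :=
            exists_noCommonNeighbor_of_not_hasCommonNeighbors (by rwa [Fintype.card_fin]) hG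
          exact ⟨S, mem_powersetCard.2 ⟨subset_univ S, hS⟩, hSG⟩
    _ ≤ ∑ S ∈ powersetCard r univ, erProb n (1 / 2) (NoCommonNeighbor · S) :=
        erProb_half_exists_le _ _
    _ = n.choose r * (1 - (1 / 2) ^ r) ^ (n - r) := by
        rw [sum_congr rfl fun S hS => by
            rw [erProb_half_noCommonNeighbor, (mem_powersetCard.1 hS).2],
          sum_const, card_powersetCard, card_univ, Fintype.card_fin, nsmul_eq_mul]

end ErdosRenyiHalf

section Asymptotics

theorem choose_mul_one_sub_pow_le_exp {n : ℕ} (hn : 0 < n) (r : ℕ) {q : ℝ} (hq : q ≤ 1) :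
    (n.choose r : ℝ) * (1 - q) ^ (n - r) ≤ exp (r * log n - q * (n - r : ℕ)) :=
  calc (n.choose r : ℝ) * (1 - q) ^ (n - r) ≤ (n : ℝ) ^ r * exp (-q) ^ (n - r) := by
        gcongr
        · exact_mod_cast Nat.choose_le_pow n r
        · exact one_sub_le_exp_neg q
    _ = exp (r * log n) * exp ((n - r : ℕ) * -q) := by
        rw [exp_nat_mul, exp_nat_mul, exp_log (by exact_mod_cast hn)]
    _ = exp (r * log n - q * (n - r : ℕ)) := by
        rw [← exp_add]
        ring_nf

theorem le_of_two_pow_le_rpow {n r : ℕ} {c : ℝ} (hn : 1 ≤ n) (hc : c ≤ 1)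
    (h : (2 : ℝ) ^ r ≤ (n : ℝ) ^ c) : r ≤ n := by
  have : (2 : ℝ) ^ r ≤ n :=
    h.trans (by simpa using rpow_le_rpow_of_exponent_le (Nat.one_le_cast.2 hn) hc)
  exact Nat.lt_two_pow_self.le.trans (by exact_mod_cast this)

theorem tendsto_sub_atTop_of_isLittleO {α : Type*} {l : Filter α} {f g : α → ℝ}
    (hf : Tendsto f l atTop) (hg : g =o[l] f) : Tendsto (f - g) l atTop :=
  (Asymptotics.IsEquivalent.refl.sub_isLittleO hg).symm.tendsto_atTop hf

theorem tendsto_log_sq_add_log_sub_rpow_atBot {ε : ℝ} (hε : 0 < ε) :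
    Tendsto (fun x : ℝ => (log x ^ 2 + log x) / log 2 - x ^ ε) atTop atBot := by
  have hlog : (fun x : ℝ => (log x ^ 2 + log x) / log 2) =o[atTop] fun x => x ^ ε := by
    have hsq : (fun x : ℝ => log x ^ 2) =o[atTop] fun x => x ^ ε := by
      simpa only [rpow_two] using isLittleO_log_rpow_rpow_atTop 2 hε
    simpa only [div_eq_inv_mul] using
      (hsq.add (isLittleO_log_rpow_atTop hε)).const_mul_left (log 2)⁻¹
  have := tendsto_sub_atTop_of_isLittleO (tendsto_rpow_atTop hε) hlog
  refine tendsto_neg_atTop_atBot.comp this |>.congr fun x => ?_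
  simp

theorem mul_log_sub_half_pow_mul_le {n r : ℕ} {c : ℝ} (hn : 1 ≤ n) (hc : c ≤ 1)
    (hr : (r : ℝ) ≤ logb 2 n) (h2r : (2 : ℝ) ^ r ≤ (n : ℝ) ^ c) :
    r * log n - (1 / 2) ^ r * (n - r : ℕ) ≤ (log n ^ 2 + log n) / log 2 - n ^ (1 - c) := by
  have hhalf : (n : ℝ) ^ (-c) ≤ (1 / 2) ^ r := by
    rw [rpow_neg (Nat.cast_nonneg n), one_div, inv_pow]
    exact inv_anti₀ (by positivity) h2r
  have hpow : (n : ℝ) ^ (1 - c) = n ^ (-c) * n := by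
    rw [sub_eq_neg_add, rpow_add (by exact_mod_cast hn), rpow_one]
  have hlogb : (r : ℝ) ≤ log n / log 2 := hr
  have hsq : (r : ℝ) * log n ≤ log n ^ 2 / log 2 := by
    rw [sq, mul_div_right_comm]
    exact mul_le_mul_of_nonneg_right hlogb (log_natCast_nonneg n)
  have hhalf_le_one : (1 / 2 : ℝ) ^ r ≤ 1 := pow_le_one₀ (by norm_num) (by norm_num)
  rw [Nat.cast_sub (le_of_two_pow_le_rpow hn hc h2r), add_div]
  nlinarith

theorem tendsto_choose_mul_one_sub_pow_zero {c : ℝ} (hc : c < 1) {r : ℕ → ℕ}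
    (hr : ∀ᶠ n : ℕ in atTop, (r n : ℝ) ≤ logb 2 n)
    (h2r : ∀ᶠ n : ℕ in atTop, (2 : ℝ) ^ r n ≤ (n : ℝ) ^ c) :
    Tendsto (fun n : ℕ => (n.choose (r n) : ℝ) * (1 - (1 / 2) ^ r n) ^ (n - r n))
      atTop (𝓝 0) := by
  have hbound := (tendsto_exp_atBot.comp (tendsto_log_sq_add_log_sub_rpow_atBot
    (sub_pos.2 hc))).comp tendsto_natCast_atTop_atTop
  have hhalf (k : ℕ) : (1 / 2 : ℝ) ^ k ≤ 1 := pow_le_one₀ (by norm_num) (by norm_num)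
  refine squeeze_zero' (Eventually.of_forall fun n =>
    mul_nonneg (Nat.cast_nonneg _) (pow_nonneg (sub_nonneg.2 (hhalf _)) _)) ?_ hbound
  filter_upwards [hr, h2r, eventually_ge_atTop 1] with n hrn h2rn hn
  exact (choose_mul_one_sub_pow_le_exp hn (r n) (hhalf _)).trans
    (exp_le_exp.2 (mul_log_sub_half_pow_mul_le hn hc.le hrn h2rn))

theorem natFloor_mul_logb_le_logb {c x : ℝ} (hc0 : 0 ≤ c) (hc1 : c ≤ 1) (hx : 1 ≤ x) :
    (⌊c * logb 2 x⌋₊ : ℝ) ≤ logb 2 x := by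
  have hlogb : 0 ≤ logb 2 x := logb_nonneg one_lt_two hx
  exact (Nat.floor_le (by positivity)).trans (mul_le_of_le_one_left hlogb hc1)

theorem two_pow_natFloor_mul_logb_le {c x : ℝ} (hc : 0 ≤ c) (hx : 1 ≤ x) :
    (2 : ℝ) ^ ⌊c * logb 2 x⌋₊ ≤ x ^ c :=
  calc (2 : ℝ) ^ ⌊c * logb 2 x⌋₊
      = 2 ^ (⌊c * logb 2 x⌋₊ : ℝ) := (rpow_natCast 2 _).symm
    _ ≤ 2 ^ (c * logb 2 x) :=
        rpow_le_rpow_of_exponent_le one_le_two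
          (Nat.floor_le (mul_nonneg hc (logb_nonneg one_lt_two hx)))
    _ = x ^ c := by
        rw [mul_comm, rpow_mul zero_le_two, rpow_logb two_pos (by norm_num) (by linarith)]

end Asymptotics

theorem tendsto_erProb_half_hasCommonNeighbors {c : ℝ} (hc0 : 0 ≤ c) (hc1 : c < 1) :
    Tendsto (fun n : ℕ => erProb n (1 / 2) (HasCommonNeighbors · ⌊c * logb 2 n⌋₊))
      atTop (𝓝 1) := by
  have hr : ∀ᶠ n : ℕ in atTop, (⌊c * logb 2 n⌋₊ : ℝ) ≤ logb 2 n :=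
    eventually_ge_atTop 1 |>.mono fun n hn =>
      natFloor_mul_logb_le_logb hc0 hc1.le (Nat.one_le_cast.2 hn)
  have h2r : ∀ᶠ n : ℕ in atTop, (2 : ℝ) ^ ⌊c * logb 2 n⌋₊ ≤ (n : ℝ) ^ c :=
    eventually_ge_atTop 1 |>.mono fun n hn =>
      two_pow_natFloor_mul_logb_le hc0 (Nat.one_le_cast.2 hn)
  have hlower := (tendsto_const_nhds (x := (1 : ℝ))).sub
    (tendsto_choose_mul_one_sub_pow_zero hc1 hr h2r)
  rw [sub_zero] at hlower
  refine tendsto_of_tendsto_of_tendsto_of_le_of_le' hlower tendsto_const_nhds ?_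
    (Eventually.of_forall fun n => erProb_half_le_one _)
  filter_upwards [h2r, eventually_ge_atTop 1] with n h2rn hn
  have hsum := erProb_half_add_erProb_half_not fun G : SimpleGraph (Fin n) =>
    HasCommonNeighbors G ⌊c * logb 2 n⌋₊
  have hnot := erProb_half_not_hasCommonNeighbors_le (le_of_two_pow_le_rpow hn hc1.le h2rn)
  linarith

/-- Lower bound, dense/uniform case. For constant `δ > 0`, a.a.s.
`w(G(n,1/2)) ≥ (1-δ) log₂ n`. -/
theorem warmth_lower_dense (δ : ℝ) (hδ : 0 < δ) :
    Filter.Tendsto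
      (fun n : ℕ => erProb n (1 / 2)
        (fun G => ENNReal.ofReal ((1 - δ) * Real.logb 2 n) ≤ (warmth G : ℝ≥0∞)))
      Filter.atTop (nhds 1) := by
  set c := max (1 - δ) (1 / 2)
  have hc0 : 0 ≤ c := le_max_of_le_right (by norm_num)
  have hc1 : c < 1 := max_lt (by linarith) (by norm_num)
  have hr : ∀ᶠ n : ℕ in atTop, 1 ≤ ⌊c * logb 2 n⌋₊ :=
    (tendsto_nat_floor_atTop.comp <| ((tendsto_logb_atTop one_lt_two).comp
      tendsto_natCast_atTop_atTop).const_mul_atTop (by positivity)).eventually_ge_atTop 1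
  refine tendsto_of_tendsto_of_tendsto_of_le_of_le'
    (tendsto_erProb_half_hasCommonNeighbors hc0 hc1) tendsto_const_nhds ?_
    (Eventually.of_forall fun n => erProb_half_le_one _)
  filter_upwards [hr] with n hn
  refine erProb_half_mono fun G hG => ofReal_le_warmth_of_hasCommonNeighbors hG hn ?_
  have hlogb : 0 ≤ logb 2 n := div_nonneg (log_natCast_nonneg n) (log_nonneg one_le_two)
  calc (1 - δ) * logb 2 n ≤ c * logb 2 n := mul_le_mul_of_nonneg_right (le_max_left _ _) hlogb
    _ ≤ ⌊c * logb 2 n⌋₊ + 1 := (Nat.lt_floor_add_one _).le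
end

section
/- Let s ≥ 1 and let v > 1 be an integer with v ≡ 1 (mod s), and let H be a finite simple graph with at least one vertex. If H has property P^s_v (every function f : D(T^s_v) → V(H) is H-extendable), then Hom(T^s, H) contains no cold maps; consequently H is (s+2)-warm and w(H) ≥ s + 2. -/
open scoped Classical ENNReal

/-!
Given a map `φ : T^s → H` and a target `a` for the root, apply property `P^s_v` to the
boundary data "root ↦ a, leaves ↦ φ" (consistent because `v > 1` keeps the root off the
leaves) and glue the resulting homomorphism of `T^s_v` to `φ` outside `T^s_v`. The result
agrees with `φ` on level `v`, which lies entirely outside `T^s_v`, so `φ` is not cold.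
Since `v ≡ 1 (mod s)`, every vertex of `T^s_v` is either internal with all its children
inside, or a leaf, which makes the glued map a homomorphism.
-/

lemma treeLevel_le (s x : ℕ) : treeLevel s x ≤ x := by
  induction x using Nat.strong_induction_on with
  | _ x ih =>
    match x with
    | 0 => rw [treeLevel]
    | j + 1 =>
      rw [treeLevel]
      have hdiv := Nat.div_le_self j s
      have := ih (j / s) (by omega)
      omega

lemma le_mul_add_one_of_le_mul_add {s v x : ℕ} (hmod : v ≡ 1 [MOD s]) (h : v ≤ s * x + s) :
    v ≤ s * x + 1 := by
  rcases Nat.eq_zero_or_pos v with rfl | hv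
  · exact Nat.zero_le _
  obtain ⟨c, hc⟩ : s ∣ v - 1 := (Nat.modEq_iff_dvd' hv).mp hmod.symm
  have hcx : c ≤ x := by
    have : s * c < s * (x + 1) := by rw [Nat.mul_succ]; omega
    exact Nat.le_of_lt_succ (Nat.lt_of_mul_lt_mul_left this)
  have := Nat.mul_le_mul_left s hcx
  omega

lemma exists_branchTree_hom_of_agree_on_leaves {W : Type*} {H : SimpleGraph W} {s v : ℕ}
    (hmod : v ≡ 1 [MOD s]) (φ : branchTree s →g H) (φ' : truncTree s v →g H)
    (hleaf : ∀ x : Fin v, v ≤ s * x + 1 → φ' x = φ x) :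
    ∃ ψ : branchTree s →g H, (∀ x : Fin v, ψ x = φ' x) ∧ ∀ x, v ≤ x → ψ x = φ x := by
  let g : ℕ → W := fun x => if h : x < v then φ' ⟨x, h⟩ else φ x
  have hchild : ∀ i j, (∃ t < s, j = s * i + t + 1) → H.Adj (g i) (g j) := by
    rintro i j ⟨t, ht, rfl⟩
    have hedge : (branchTree s).Adj i (s * i + t + 1) := Or.inl ⟨t, ht, rfl⟩
    by_cases hj : s * i + t + 1 < v
    · have hi : i < v := by have := Nat.le_mul_of_pos_left i (by omega : 0 < s); omega
      simp only [g, dif_pos hi, dif_pos hj]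
      exact φ'.map_rel hedge
    by_cases hi : i < v
    · have hi_leaf : v ≤ s * i + 1 := le_mul_add_one_of_le_mul_add hmod (by omega)
      simp only [g, dif_pos hi, dif_neg hj, hleaf ⟨i, hi⟩ hi_leaf]
      exact φ.map_rel hedge
    · simp only [g, dif_neg hi, dif_neg hj]
      exact φ.map_rel hedge
  refine ⟨⟨g, ?_⟩, fun x => dif_pos x.isLt, fun x hx => dif_neg (Nat.not_lt.mpr hx)⟩
  rintro i j (h | h)
  · exact hchild i j h
  · exact (hchild j i h).symm

lemma not_isCold_of_propertyP {W : Type*} {H : SimpleGraph W} {s v : ℕ} (hv : 1 < v)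
    (hmod : v ≡ 1 [MOD s]) (hP : PropertyP H s v) (φ : branchTree s →g H) :
    ¬ IsCold H s φ := by
  rintro ⟨a, ha⟩
  let root : treeD s v := ⟨⟨0, by omega⟩, Or.inl rfl⟩
  obtain ⟨φ', hφ'⟩ := hP fun x => if (x : ℕ) = 0 then a else φ x
  have hleaf : ∀ x : Fin v, v ≤ s * x + 1 → φ' x = φ x := fun x hx => by
    have hx0 : (x : ℕ) ≠ 0 := by rintro h; rw [h] at hx; omega
    simpa [hx0] using hφ' ⟨x, Or.inr hx⟩
  obtain ⟨ψ, hψ_in, hψ_out⟩ := exists_branchTree_hom_of_agree_on_leaves hmod φ φ' hleaf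
  refine ha v ⟨ψ, fun x hx => hψ_out x (hx ▸ treeLevel_le s x), ?_⟩
  simpa [root] using (hψ_in root).trans (hφ' root)

theorem propertyP_implies_warm_general {W : Type*}
    (H : SimpleGraph W) (s v : ℕ) (hv : 1 < v)
    (hmod : v ≡ 1 [MOD s]) (hP : PropertyP H s v) :
    (∀ φ : branchTree s →g H, ¬ IsCold H s φ) ∧
      IsWarm H (s + 2) ∧ (s + 2 : ℕ∞) ≤ warmth H := by
  have hnotCold : ∀ φ : branchTree s →g H, ¬ IsCold H s φ :=
    not_isCold_of_propertyP hv hmod hP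
  exact ⟨hnotCold, hnotCold, le_sSup ⟨s + 2, hnotCold, rfl⟩⟩

/-- If `s ≥ 1`, `v > 1` with `v ≡ 1 (mod s)`, and a finite nonempty
graph `H` has property `P^s_v`, then `Hom(T^s, H)` contains no cold maps; hence `H`
is `(s+2)`-warm and `w(H) ≥ s + 2`. -/
theorem propertyP_implies_warm {W : Type*} [Fintype W] [Nonempty W]
    (H : SimpleGraph W) (s v : ℕ) (hs : 1 ≤ s) (hv : 1 < v)
    (hmod : v ≡ 1 [MOD s]) (hP : PropertyP H s v) :
    (∀ φ : branchTree s →g H, ¬ IsCold H s φ) ∧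
      IsWarm H (s + 2) ∧ (s + 2 : ℕ∞) ≤ warmth H :=
  propertyP_implies_warm_general H s v hv hmod hP
end
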